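/- Let (V, B_d, B_r) be an interconnection with structural synchronization property and B_r nonempty, with incidence matrices G_d, G_r. If there exist diagonal positive matrices Λ_d, Λ_r such that Re λ₂(G_d Λ_d G_dᵀ + i G_r Λ_r G_rᵀ) ≤ 0, then there exists a nonzero vector x with G_dᵀ G_r x = 0 and sgn(G_rᵀ G_r x) = sgn(x) entrywise. -/

import Mathlib

open Matrix Polynomial

/-- `G` is the incidence matrix of a graph: every column is `e_k - e_ℓ`
for some pair of distinct vertices `k, ℓ`. -/
def IsIncidence {q p : ℕ} (G : Matrix (Fin q) (Fin p) ℝ) : Prop :=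
  ∀ j : Fin p, ∃ k ℓ : Fin q, k ≠ ℓ ∧
    ∀ i : Fin q, G i j = (if i = k then 1 else 0) - (if i = ℓ then 1 else 0)

/-- The complex matrix `D + iR` built from two real matrices. -/
noncomputable def cM {q : ℕ} (D R : Matrix (Fin q) (Fin q) ℝ) :
    Matrix (Fin q) (Fin q) ℂ :=
  D.map (fun a => (a : ℂ)) + Complex.I • (R.map (fun a => (a : ℂ)))

/-- `Re λ₂(M) > 0`: at most one eigenvalue (with multiplicity), ordered by real
part, has nonpositive real part. -/
noncomputable def reLam2Pos {q : ℕ} (M : Matrix (Fin q) (Fin q) ℂ) : Prop :=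
  (M.charpoly.roots.filter (fun μ : ℂ => μ.re ≤ 0)).card ≤ 1

/-- `Re λ₂(M) ≤ 0`: at least two eigenvalues (with multiplicity), ordered by real
part, have nonpositive real part. -/
noncomputable def reLam2Nonpos {q : ℕ} (M : Matrix (Fin q) (Fin q) ℂ) : Prop :=
  2 ≤ (M.charpoly.roots.filter (fun μ : ℂ => μ.re ≤ 0)).card

/-- The weighted Laplacian `G Λ Gᵀ`. -/
def lapOf {q p : ℕ} (G : Matrix (Fin q) (Fin p) ℝ) (w : Fin p → ℝ) :
    Matrix (Fin q) (Fin q) ℝ :=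
  G * diagonal w * Gᵀ


noncomputable def mc {m n : ℕ} (A : Matrix (Fin m) (Fin n) ℝ) : Matrix (Fin m) (Fin n) ℂ :=
  A.map (fun a => (a : ℂ))


lemma mc_lap {q p : ℕ} (G : Matrix (Fin q) (Fin p) ℝ) (w : Fin p → ℝ) :
    mc (lapOf G w) = mc G * diagonal (fun j => (w j : ℂ)) * (mc G)ᵀ := by
  unfold mc lapOf
  rw [show ((fun a : ℝ => (a:ℂ))) = ⇑Complex.ofRealHom from rfl]
  rw [Matrix.map_mul, Matrix.map_mul, Matrix.transpose_map]
  congr 2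
  simp [Matrix.diagonal_map]

lemma lap_mulVec {q p : ℕ} (G : Matrix (Fin q) (Fin p) ℝ) (w : Fin p → ℝ) (v : Fin q → ℂ) :
    (mc (lapOf G w)).mulVec v
      = (mc G).mulVec (fun j => (w j : ℂ) * ((mc G)ᵀ.mulVec v j)) := by
  rw [mc_lap, ← mulVec_mulVec, ← mulVec_mulVec]
  congr 1
  funext j
  rw [show ((diagonal fun j => ((w j : ℂ))) *ᵥ ((mc G)ᵀ *ᵥ v)) = fun j => (w j : ℂ) * ((mc G)ᵀ *ᵥ v) j from funext fun j => mulVec_diagonal _ _ j]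

lemma star_dot_lap {q p : ℕ} (G : Matrix (Fin q) (Fin p) ℝ) (w : Fin p → ℝ) (v : Fin q → ℂ) :
    star v ⬝ᵥ (mc (lapOf G w)).mulVec v
      = ((∑ j, w j * Complex.normSq ((mc G)ᵀ.mulVec v j) : ℝ) : ℂ) := by
  rw [lap_mulVec, dotProduct_mulVec]
  have hvm : (star v) ᵥ* (mc G) = star ((mc G)ᵀ.mulVec v) := by
    funext j
    simp only [vecMul, mulVec, dotProduct, mc, Pi.star_apply, transpose_apply, map_apply,
      star_sum, star_mul']
    refine Finset.sum_congr rfl fun i _ => ?_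
    simp [mul_comm]
  rw [hvm]
  push_cast
  simp only [dotProduct, Pi.star_apply]
  refine Finset.sum_congr rfl fun j _ => ?_
  rw [show star ((mc G)ᵀ.mulVec v j) * ((w j : ℂ) * (mc G)ᵀ.mulVec v j)
      = (w j : ℂ) * (star ((mc G)ᵀ.mulVec v j) * (mc G)ᵀ.mulVec v j) by ring]
  rw [Complex.star_def, ← Complex.normSq_eq_conj_mul_self]


lemma quad_nonneg {q p : ℕ} (G : Matrix (Fin q) (Fin p) ℝ) {w : Fin p → ℝ}
    (hw : ∀ j, 0 ≤ w j) (v : Fin q → ℂ) :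
    0 ≤ ∑ j, w j * Complex.normSq ((mc G)ᵀ.mulVec v j) :=
  Finset.sum_nonneg fun j _ => mul_nonneg (hw j) (Complex.normSq_nonneg _)

lemma GT_eq_zero_of_quad {q p : ℕ} {G : Matrix (Fin q) (Fin p) ℝ} {w : Fin p → ℝ}
    (hw : ∀ j, 0 < w j) {v : Fin q → ℂ}
    (h : ∑ j, w j * Complex.normSq ((mc G)ᵀ.mulVec v j) = 0) :
    (mc G)ᵀ.mulVec v = 0 := by
  funext j
  have h0 := (Finset.sum_eq_zero_iff_of_nonneg
    (fun j _ => mul_nonneg (hw j).le (Complex.normSq_nonneg _))).mp h j (Finset.mem_univ j)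
  have := (mul_eq_zero.mp h0).resolve_left (hw j).ne'
  simpa [Complex.normSq_eq_zero] using this

lemma cM_mulVec {q : ℕ} (D R : Matrix (Fin q) (Fin q) ℝ) (v : Fin q → ℂ) :
    (cM D R).mulVec v = (mc D).mulVec v + Complex.I • ((mc R).mulVec v) := by
  simp [cM, mc, add_mulVec, smul_mulVec]

lemma star_dot_cM {q pd pr : ℕ} (Gd : Matrix (Fin q) (Fin pd) ℝ) (Gr : Matrix (Fin q) (Fin pr) ℝ)
    (wd : Fin pd → ℝ) (wr : Fin pr → ℝ) (v : Fin q → ℂ) :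
    star v ⬝ᵥ (cM (lapOf Gd wd) (lapOf Gr wr)).mulVec v
      = ((∑ j, wd j * Complex.normSq ((mc Gd)ᵀ.mulVec v j) : ℝ) : ℂ)
        + Complex.I * ((∑ j, wr j * Complex.normSq ((mc Gr)ᵀ.mulVec v j) : ℝ) : ℂ) := by
  rw [cM_mulVec, dotProduct_add, dotProduct_smul, star_dot_lap, star_dot_lap, smul_eq_mul]

lemma real_pair_eq {a b : ℝ} {z : ℂ} (h : (a : ℂ) + Complex.I * b = z) :
    a = z.re ∧ b = z.im := by
  constructor <;> (rw [← h]; simp)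

lemma star_dot_self {q : ℕ} (v : Fin q → ℂ) :
    star v ⬝ᵥ v = ((∑ i, Complex.normSq (v i) : ℝ) : ℂ) := by
  push_cast
  simp only [dotProduct, Pi.star_apply]
  refine Finset.sum_congr rfl fun i _ => ?_
  rw [Complex.star_def, ← Complex.normSq_eq_conj_mul_self]

lemma sum_normSq_pos {q : ℕ} {v : Fin q → ℂ} (hv : v ≠ 0) :
    0 < ∑ i, Complex.normSq (v i) := by
  rcases Function.ne_iff.mp hv with ⟨i, hi⟩
  refine Finset.sum_pos' (fun i _ => Complex.normSq_nonneg _) ⟨i, Finset.mem_univ i, ?_⟩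
  simpa [Complex.normSq_pos] using hi


lemma lap_mulVec_zero {q p : ℕ} {G : Matrix (Fin q) (Fin p) ℝ} (w : Fin p → ℝ)
    {v : Fin q → ℂ} (h : (mc G)ᵀ.mulVec v = 0) : (mc (lapOf G w)).mulVec v = 0 := by
  rw [lap_mulVec, show (fun j => (w j : ℂ) * ((mc G)ᵀ.mulVec v j)) = 0 by
    funext j; rw [h]; simp]
  simp

-- kernel characterization
lemma ker_cM {q pd pr : ℕ} {Gd : Matrix (Fin q) (Fin pd) ℝ} {Gr : Matrix (Fin q) (Fin pr) ℝ}
    {wd : Fin pd → ℝ} {wr : Fin pr → ℝ} (hwd : ∀ j, 0 < wd j) (hwr : ∀ j, 0 < wr j)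
    {v : Fin q → ℂ} :
    (cM (lapOf Gd wd) (lapOf Gr wr)).mulVec v = 0 ↔
      (mc Gd)ᵀ.mulVec v = 0 ∧ (mc Gr)ᵀ.mulVec v = 0 := by
  constructor
  · intro h
    have h0 : star v ⬝ᵥ (cM (lapOf Gd wd) (lapOf Gr wr)).mulVec v = 0 := by rw [h]; simp
    rw [star_dot_cM] at h0
    obtain ⟨h1, h2⟩ := real_pair_eq h0
    exact ⟨GT_eq_zero_of_quad hwd (by simpa using h1),
      GT_eq_zero_of_quad hwr (by simpa using h2)⟩
  · rintro ⟨h1, h2⟩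
    rw [cM_mulVec, lap_mulVec_zero wd h1, lap_mulVec_zero wr h2]
    simp

-- eigen structure
lemma eigen_struct {q pd pr : ℕ} {Gd : Matrix (Fin q) (Fin pd) ℝ} {Gr : Matrix (Fin q) (Fin pr) ℝ}
    {wd : Fin pd → ℝ} {wr : Fin pr → ℝ} (hwd : ∀ j, 0 < wd j) (hwr : ∀ j, 0 < wr j)
    {v : Fin q → ℂ} {μ : ℂ} (hv : v ≠ 0)
    (hMv : (cM (lapOf Gd wd) (lapOf Gr wr)).mulVec v = μ • v) (hre : μ.re ≤ 0) :
    ∃ β : ℝ, 0 ≤ β ∧ μ = Complex.I * β ∧ (mc Gd)ᵀ.mulVec v = 0 ∧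
      (mc (lapOf Gr wr)).mulVec v = (β : ℂ) • v := by
  set sd := ∑ j, wd j * Complex.normSq ((mc Gd)ᵀ.mulVec v j) with hsd
  set sr := ∑ j, wr j * Complex.normSq ((mc Gr)ᵀ.mulVec v j) with hsr
  set n := ∑ i, Complex.normSq (v i) with hn
  have hnpos : 0 < n := sum_normSq_pos hv
  have key : (sd : ℂ) + Complex.I * (sr : ℂ) = μ * (n : ℂ) := by
    rw [← star_dot_cM Gd Gr wd wr v, hMv, dotProduct_smul, star_dot_self, smul_eq_mul]
  obtain ⟨h1, h2⟩ := real_pair_eq key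
  have hre' : (μ * (n:ℂ)).re = μ.re * n := by simp
  have him' : (μ * (n:ℂ)).im = μ.im * n := by simp
  rw [hre'] at h1; rw [him'] at h2
  have hsd0 : sd = 0 :=
    le_antisymm (by rw [h1]; exact mul_nonpos_of_nonpos_of_nonneg hre hnpos.le)
      (quad_nonneg Gd (fun j => (hwd j).le) v)
  have hdz : (mc Gd)ᵀ.mulVec v = 0 := GT_eq_zero_of_quad hwd hsd0
  have hμre : μ.re = 0 := by
    have := h1; rw [hsd0] at this
    exact (mul_eq_zero.mp this.symm).resolve_right hnpos.ne'
  refine ⟨μ.im, ?_, ?_, hdz, ?_⟩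
  · have : μ.im = sr / n := by field_simp [h2]; exact h2.symm
    rw [this]
    exact div_nonneg (quad_nonneg Gr (fun j => (hwr j).le) v) hnpos.le
  · apply Complex.ext <;> simp [hμre]
  · have hD0 : (mc (lapOf Gd wd)).mulVec v = 0 := lap_mulVec_zero wd hdz
    have : Complex.I • ((mc (lapOf Gr wr)).mulVec v) = μ • v := by
      rw [← hMv, cM_mulVec, hD0, zero_add]
    funext i
    have hi := congrFun this i
    simp only [Pi.smul_apply, smul_eq_mul] at hi
    have hμ : μ = Complex.I * μ.im := by apply Complex.ext <;> simp [hμre]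
    rw [hμ, mul_assoc] at hi
    have := mul_left_cancel₀ Complex.I_ne_zero hi
    simpa using this


lemma mc_transpose {m n : ℕ} (A : Matrix (Fin m) (Fin n) ℝ) : (mc A)ᵀ = mc Aᵀ := by
  unfold mc; rw [Matrix.transpose_map]

lemma lap_symm {q p : ℕ} (G : Matrix (Fin q) (Fin p) ℝ) (w : Fin p → ℝ) :
    (lapOf G w)ᵀ = lapOf G w := by
  unfold lapOf
  rw [Matrix.transpose_mul, Matrix.transpose_mul, Matrix.transpose_transpose,
    Matrix.diagonal_transpose, Matrix.mul_assoc]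

lemma mc_mulVec_star {m n : ℕ} (A : Matrix (Fin m) (Fin n) ℝ) (z : Fin n → ℂ) :
    (mc A).mulVec (star z) = star ((mc A).mulVec z) := by
  funext i
  simp only [mulVec, dotProduct, mc, map_apply, Pi.star_apply, star_sum, star_mul']
  exact Finset.sum_congr rfl fun j _ => by simp [mul_comm]

-- semisimplicity at zero
lemma cM_semisimple {q pd pr : ℕ} {Gd : Matrix (Fin q) (Fin pd) ℝ} {Gr : Matrix (Fin q) (Fin pr) ℝ}
    {wd : Fin pd → ℝ} {wr : Fin pr → ℝ} (hwd : ∀ j, 0 < wd j) (hwr : ∀ j, 0 < wr j)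
    (v : Fin q → ℂ)
    (h : (cM (lapOf Gd wd) (lapOf Gr wr)).mulVec
          ((cM (lapOf Gd wd) (lapOf Gr wr)).mulVec v) = 0) :
    (cM (lapOf Gd wd) (lapOf Gr wr)).mulVec v = 0 := by
  set M := cM (lapOf Gd wd) (lapOf Gr wr) with hM
  set y := M.mulVec v with hy
  obtain ⟨hd, hr⟩ := (ker_cM hwd hwr).mp h
  have hDy : (mc (lapOf Gd wd)).mulVec y = 0 := lap_mulVec_zero wd hd
  have hRy : (mc (lapOf Gr wr)).mulVec y = 0 := lap_mulVec_zero wr hr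
  by_contra hy0
  have hMT : Mᵀ = cM (lapOf Gd wd) (lapOf Gr wr) := by
    rw [hM]
    unfold cM
    rw [Matrix.transpose_add, Matrix.transpose_smul, ← Matrix.transpose_map,
      ← Matrix.transpose_map, lap_symm, lap_symm]
  have hvm : (star y) ᵥ* M = 0 := by
    have h1 : (star y) ᵥ* M = Mᵀ.mulVec (star y) := by
      conv_lhs => rw [← Matrix.transpose_transpose M]
      rw [Matrix.vecMul_transpose]
    rw [h1, hMT, cM_mulVec, mc_mulVec_star, mc_mulVec_star, hDy, hRy]
    simp
  have hdz : star y ⬝ᵥ y = 0 := by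
    rw [hy, dotProduct_mulVec, hvm, zero_dotProduct]
  rw [star_dot_self] at hdz
  have hpos := sum_normSq_pos hy0
  have : (∑ i, Complex.normSq (y i)) = 0 := by exact_mod_cast hdz
  rw [this] at hpos
  exact lt_irrefl 0 hpos

lemma charpoly_eval {n : ℕ} (M : Matrix (Fin n) (Fin n) ℂ) (μ : ℂ) :
    M.charpoly.eval μ = (Matrix.scalar (Fin n) μ - M).det := by
  rw [Matrix.charpoly, eval_det, matPolyEquiv_charmatrix, eval_sub, eval_X, eval_C]

lemma exists_eigen {n : ℕ} (M : Matrix (Fin n) (Fin n) ℂ) {μ : ℂ}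
    (h : μ ∈ M.charpoly.roots) : ∃ v, v ≠ 0 ∧ M.mulVec v = μ • v := by
  have hr : M.charpoly.eval μ = 0 := IsRoot.eq_zero (isRoot_of_mem_roots h)
  rw [charpoly_eval] at hr
  obtain ⟨v, hv, hMv⟩ := (Matrix.exists_mulVec_eq_zero_iff).mpr hr
  refine ⟨v, hv, ?_⟩
  have := hMv
  rw [Matrix.sub_mulVec] at this
  have h2 : (Matrix.scalar (Fin n) μ).mulVec v = μ • v := by
    funext i; simp [Matrix.scalar, mulVec_diagonal]
  rw [h2] at this
  linear_combination (norm := module) -this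

lemma charpoly_toLin' {n : ℕ} (M : Matrix (Fin n) (Fin n) ℂ) :
    (Matrix.toLin' M).charpoly = M.charpoly := by
  rw [← LinearMap.charpoly_toMatrix (Matrix.toLin' M) (Pi.basisFun ℂ (Fin n)),
    LinearMap.toMatrix_eq_toMatrix', LinearMap.toMatrix'_toLin']

lemma maxGen_eq_ker {n : ℕ} (φ : Module.End ℂ (Fin n → ℂ))
    (h : ∀ v, φ (φ v) = 0 → φ v = 0) :
    φ.maxGenEigenspace 0 = LinearMap.ker φ := by
  apply le_antisymm
  · intro m hm
    rw [Module.End.mem_maxGenEigenspace] at hm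
    obtain ⟨k, hk⟩ := hm
    simp only [zero_smul, sub_zero] at hk
    rw [LinearMap.mem_ker]
    rcases k with _ | j
    · simp only [pow_zero, Module.End.one_apply] at hk
      rw [hk]; simp
    · -- induction: φ^(j+1) m = 0 → φ m = 0
      induction j generalizing m with
      | zero => simpa using hk
      | succ i ih =>
        have hstep : (φ ^ (i + 1)) (φ m) = 0 := by
          rw [← Module.End.mul_apply, ← pow_succ]
          exact hk
        exact h m (ih hstep)
  · intro m hm
    rw [Module.End.mem_maxGenEigenspace]
    exact ⟨1, by simpa using hm⟩

lemma count_eq_trailing {n : ℕ} (M : Matrix (Fin n) (Fin n) ℂ) :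
    M.charpoly.roots.count 0 = M.charpoly.natTrailingDegree := by
  rw [count_roots, Polynomial.rootMultiplicity_eq_natTrailingDegree']

lemma trailing_eq_finrank_maxGen {n : ℕ} (M : Matrix (Fin n) (Fin n) ℂ) :
    M.charpoly.natTrailingDegree
      = Module.finrank ℂ (Module.End.maxGenEigenspace (Matrix.toLin' M) 0) := by
  rw [← charpoly_toLin', LinearMap.finrank_maxGenEigenspace_zero_eq]

lemma count_le_finrank_ker {n : ℕ} (M : Matrix (Fin n) (Fin n) ℂ)
    (hsemi : ∀ v, M.mulVec (M.mulVec v) = 0 → M.mulVec v = 0) :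
    M.charpoly.roots.count 0
      ≤ Module.finrank ℂ (LinearMap.ker (Matrix.toLin' M)) := by
  rw [count_eq_trailing, trailing_eq_finrank_maxGen,
    maxGen_eq_ker _ (by simpa [Matrix.toLin'_apply] using hsemi)]

-- B2 : kernel dim ≤ alg mult
lemma finrank_ker_le_count {n : ℕ} (M : Matrix (Fin n) (Fin n) ℂ) :
    Module.finrank ℂ (LinearMap.ker (Matrix.toLin' M))
      ≤ M.charpoly.roots.count 0 := by
  rw [count_eq_trailing, trailing_eq_finrank_maxGen]
  apply Submodule.finrank_mono
  intro m hm
  rw [Module.End.mem_maxGenEigenspace]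
  exact ⟨1, by simpa using hm⟩

-- count bound from filter
lemma count_le_filter_card {n : ℕ} (M : Matrix (Fin n) (Fin n) ℂ) :
    M.charpoly.roots.count 0
      ≤ (M.charpoly.roots.filter (fun μ : ℂ => μ.re ≤ 0)).card := by
  classical
  rw [Multiset.count_eq_card_filter_eq]
  apply Multiset.card_le_card
  apply Multiset.monotone_filter_right
  intro μ hμ
  rw [← hμ]; simp

lemma filter_card_eq_count {n : ℕ} (M : Matrix (Fin n) (Fin n) ℂ)
    (hall : ∀ μ ∈ M.charpoly.roots, μ.re ≤ 0 → μ = 0) :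
    (M.charpoly.roots.filter (fun μ : ℂ => μ.re ≤ 0)).card
      = M.charpoly.roots.count 0 := by
  classical
  rw [Multiset.count_eq_card_filter_eq]
  congr 1
  apply Multiset.filter_congr
  intro μ hμ
  constructor
  · intro h; exact (hall μ hμ h).symm
  · intro h; rw [← h]; simp


lemma re_mulVec {m n : ℕ} (A : Matrix (Fin m) (Fin n) ℝ) (z : Fin n → ℂ) :
    A.mulVec (fun j => (z j).re) = fun i => ((mc A).mulVec z i).re := by
  funext i
  simp only [mulVec, dotProduct, mc, map_apply, Complex.re_sum]
  exact Finset.sum_congr rfl fun j _ => by simp [Complex.mul_re]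

lemma im_mulVec {m n : ℕ} (A : Matrix (Fin m) (Fin n) ℝ) (z : Fin n → ℂ) :
    A.mulVec (fun j => (z j).im) = fun i => ((mc A).mulVec z i).im := by
  funext i
  simp only [mulVec, dotProduct, mc, map_apply, Complex.im_sum]
  exact Finset.sum_congr rfl fun j _ => by simp [Complex.mul_im]

lemma sign_of_scale {w β A t : ℝ} (hw : 0 < w) (hβ : 0 < β) (h : w * A = β * t) :
    Real.sign A = Real.sign t := by
  rcases lt_trichotomy t 0 with ht | ht | ht
  · have hA : A < 0 := by nlinarith
    rw [Real.sign_of_neg hA, Real.sign_of_neg ht]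
  · have hA : A = 0 := by
      have : w * A = 0 := by rw [h, ht, mul_zero]
      exact (mul_eq_zero.mp this).resolve_left hw.ne'
    rw [hA, ht, Real.sign_zero]
  · have hA : 0 < A := by nlinarith
    rw [Real.sign_of_pos hA, Real.sign_of_pos ht]

lemma caseA {q pd pr : ℕ} (Gd : Matrix (Fin q) (Fin pd) ℝ) (Gr : Matrix (Fin q) (Fin pr) ℝ)
    {wr : Fin pr → ℝ} (hwr : ∀ j, 0 < wr j) {β : ℝ} (hβ : 0 < β) {v : Fin q → ℂ}
    (hv : v ≠ 0) (hd : (mc Gd)ᵀ.mulVec v = 0)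
    (hr : (mc (lapOf Gr wr)).mulVec v = (β : ℂ) • v) :
    ∃ x : Fin pr → ℝ, x ≠ 0 ∧ Gdᵀ.mulVec (Gr.mulVec x) = 0 ∧
      ∀ i, Real.sign ((Grᵀ.mulVec (Gr.mulVec x)) i) = Real.sign (x i) := by
  set u : Fin pr → ℂ := fun j => (wr j : ℂ) * ((mc Gr)ᵀ.mulVec v j) with hu
  have hGru : (mc Gr).mulVec u = (β : ℂ) • v := by rw [← lap_mulVec]; exact hr
  have hu0 : u ≠ 0 := by
    intro h0
    apply hv
    have := hGru
    rw [h0, mulVec_zero] at this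
    have hβc : (β : ℂ) ≠ 0 := by exact_mod_cast hβ.ne'
    funext i
    have := congrFun this i
    simp only [Pi.smul_apply, smul_eq_mul, Pi.zero_apply] at this ⊢
    exact (mul_eq_zero.mp this.symm).resolve_left hβc
  have hc1 : (mc Gd)ᵀ.mulVec ((mc Gr).mulVec u) = 0 := by
    rw [hGru, mulVec_smul, hd, smul_zero]
  have hc2 : ∀ j, (wr j : ℂ) * ((mc Gr)ᵀ.mulVec ((mc Gr).mulVec u) j) = (β : ℂ) * u j := by
    intro j
    rw [hGru, mulVec_smul]
    simp only [Pi.smul_apply, smul_eq_mul, hu]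
    ring
  -- real/imag parts
  have key : ∀ x : Fin pr → ℝ,
      ((∀ j, x j = (u j).re) ∨ (∀ j, x j = (u j).im)) →
      Gdᵀ.mulVec (Gr.mulVec x) = 0 ∧
        ∀ j, wr j * (Grᵀ.mulVec (Gr.mulVec x)) j = β * x j := by
    intro x hx
    rcases hx with hx | hx
    · have hxe : x = fun j => (u j).re := funext hx
      constructor
      · rw [hxe, re_mulVec Gr u, re_mulVec Gdᵀ ((mc Gr).mulVec u), ← mc_transpose, hc1]
        funext i; simp
      · intro j
        rw [hxe, re_mulVec Gr u, re_mulVec Grᵀ ((mc Gr).mulVec u), ← mc_transpose]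
        have := congrArg Complex.re (hc2 j)
        simpa [Complex.mul_re] using this
    · have hxe : x = fun j => (u j).im := funext hx
      constructor
      · rw [hxe, im_mulVec Gr u, im_mulVec Gdᵀ ((mc Gr).mulVec u), ← mc_transpose, hc1]
        funext i; simp
      · intro j
        rw [hxe, im_mulVec Gr u, im_mulVec Grᵀ ((mc Gr).mulVec u), ← mc_transpose]
        have := congrArg Complex.im (hc2 j)
        simpa using by simpa [Complex.mul_im] using this
  -- choose nonzero part
  by_cases hre0 : (fun j => (u j).re) = (0 : Fin pr → ℝ)
  · refine ⟨fun j => (u j).im, ?_, ?_, ?_⟩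
    · intro h0
      apply hu0
      funext j
      have h1 := congrFun hre0 j
      have h2 := congrFun h0 j
      simp only [Pi.zero_apply] at h1 h2
      exact Complex.ext h1 h2
    · exact (key _ (Or.inr fun j => rfl)).1
    · intro j
      exact sign_of_scale (hwr j) hβ ((key _ (Or.inr fun j => rfl)).2 j)
  · refine ⟨fun j => (u j).re, hre0, (key _ (Or.inl fun j => rfl)).1, ?_⟩
    intro j
    exact sign_of_scale (hwr j) hβ ((key _ (Or.inl fun j => rfl)).2 j)

/-- If an SS interconnection with `B_r ≠ ∅` has `Re λ₂(D + iR) ≤ 0` for some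
choice of positive weights, then there is a nonzero `x` with `G_dᵀ G_r x = 0`
and `sgn(G_rᵀ G_r x) = sgn(x)` entrywise. -/
theorem stmt15 {q pd pr : ℕ} (hq : 2 ≤ q)
    (Gd : Matrix (Fin q) (Fin pd) ℝ) (Gr : Matrix (Fin q) (Fin pr) ℝ)
    (hGd : IsIncidence Gd) (hGr : IsIncidence Gr)
    (hSS : ∃ (wd : Fin pd → ℝ) (wr : Fin pr → ℝ),
      (∀ i, 0 < wd i) ∧ (∀ i, 0 < wr i) ∧
      reLam2Pos (cM (lapOf Gd wd) (lapOf Gr wr)))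
    (hpr : 0 < pr)
    (hfail : ∃ (wd : Fin pd → ℝ) (wr : Fin pr → ℝ),
      (∀ i, 0 < wd i) ∧ (∀ i, 0 < wr i) ∧
      reLam2Nonpos (cM (lapOf Gd wd) (lapOf Gr wr))) :
    ∃ x : Fin pr → ℝ, x ≠ 0 ∧ Gdᵀ.mulVec (Gr.mulVec x) = 0 ∧
      ∀ i, Real.sign ((Grᵀ.mulVec (Gr.mulVec x)) i) = Real.sign (x i) := by
  classical
  obtain ⟨wd', wr', hwd', hwr', hP⟩ := hSS
  obtain ⟨wd, wr, hwd, hwr, hN⟩ := hfail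
  set M := cM (lapOf Gd wd) (lapOf Gr wr) with hMdef
  by_cases hA : ∃ μ ∈ M.charpoly.roots, μ.re ≤ 0 ∧ μ ≠ 0
  · obtain ⟨μ, hmem, hre, hne⟩ := hA
    obtain ⟨v, hv, hMv⟩ := exists_eigen M hmem
    obtain ⟨β, hβ0, hμβ, hd, hrv⟩ := eigen_struct hwd hwr hv hMv hre
    have hβpos : 0 < β := lt_of_le_of_ne hβ0 (by
      rintro rfl
      apply hne
      rw [hμβ]
      simp)
    exact caseA Gd Gr hwr hβpos hv hd hrv
  · exfalso
    push_neg at hA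
    unfold reLam2Nonpos at hN
    have h2count : 2 ≤ M.charpoly.roots.count 0 := by
      rw [← filter_card_eq_count M (fun μ hμ h1 => hA μ hμ h1)]
      exact hN
    have hker2 : 2 ≤ Module.finrank ℂ (LinearMap.ker (Matrix.toLin' M)) :=
      le_trans h2count (count_le_finrank_ker M (fun v h => cM_semisimple hwd hwr v h))
    set M' := cM (lapOf Gd wd') (lapOf Gr wr') with hM'def
    have hmono : LinearMap.ker (Matrix.toLin' M) ≤ LinearMap.ker (Matrix.toLin' M') := by
      intro v hv
      rw [LinearMap.mem_ker, Matrix.toLin'_apply] at hv ⊢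
      obtain ⟨h1, h2⟩ := (ker_cM hwd hwr).mp hv
      exact (ker_cM hwd' hwr').mpr ⟨h1, h2⟩
    have hc' : 2 ≤ M'.charpoly.roots.count 0 :=
      le_trans (le_trans hker2 (Submodule.finrank_mono hmono)) (finrank_ker_le_count M')
    have hfin := le_trans hc' (count_le_filter_card M')
    unfold reLam2Pos at hP
    omega
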